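/- Let A be a finite idempotent algebra, a,b ∈ A, and φ an automorphism of A with φ(a) = b and φ(b) = a. Let ∗ be a binary term operation of A, and suppose there is a binary term operation f of A such that the element c = f(a,b) satisfies c∗a = a∗c = a and c∗b = b∗c = b. Then A has a ternary term operation g which is a majority operation on {a,b}: g(a,a,b) = g(a,b,a) = g(b,a,a) = a and g(b,b,a) = g(b,a,b) = g(a,b,b) = b. -/

import Mathlib

/-!
Take `g x y z = f x y ∗ (f x z ∗ f y z)`. Besides `c = f a b`, the element `d = f b a = φ c`
also absorbs `a` and `b` under `∗`, since `φ` preserves term operations and swaps `a` and `b`.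
Using idempotence of `f` and `∗`, each of the six majority values then reduces to absorption
identities for `c` and `d`, e.g. `g a b a = c ∗ (a ∗ d) = c ∗ a = a`.
-/

namespace UA

/-- Terms over a signature `(ι, ar)` with `n` variables. -/
inductive Term (ι : Type) (ar : ι → ℕ) (n : ℕ) : Type where
  | var : Fin n → Term ι ar n
  | app : (i : ι) → (Fin (ar i) → Term ι ar n) → Term ι ar n

/-- Evaluation of a term in an algebra with operations `ops`. -/
def Term.eval {ι : Type} {ar : ι → ℕ} {A : Type} (ops : ∀ i : ι, (Fin (ar i) → A) → A)
    {n : ℕ} : Term ι ar n → (Fin n → A) → A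
  | .var j, x => x j
  | .app i ts, x => ops i fun k => Term.eval ops (ts k) x

variable {ι : Type} {ar : ι → ℕ} {A : Type}

/-- An algebra is idempotent if every basic operation is. -/
def Idempotent (ops : ∀ i : ι, (Fin (ar i) → A) → A) : Prop :=
  ∀ (i : ι) (x : A), ops i (fun _ => x) = x

/-- A subuniverse: a subset closed under all basic operations. -/
def IsSubuniverse (ops : ∀ i : ι, (Fin (ar i) → A) → A) (S : Set A) : Prop :=
  ∀ (i : ι) (xs : Fin (ar i) → A), (∀ k, xs k ∈ S) → ops i xs ∈ S

/-- The subuniverse generated by `X`. -/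
def Sg (ops : ∀ i : ι, (Fin (ar i) → A) → A) (X : Set A) : Set A :=
  ⋂₀ {S | IsSubuniverse ops S ∧ X ⊆ S}

/-- A tolerance: a reflexive symmetric compatible binary relation. -/
def IsTolerance (ops : ∀ i : ι, (Fin (ar i) → A) → A) (τ : A → A → Prop) : Prop :=
  (∀ x, τ x x) ∧ (∀ x y, τ x y → τ y x) ∧
  ∀ (i : ι) (xs ys : Fin (ar i) → A), (∀ k, τ (xs k) (ys k)) → τ (ops i xs) (ops i ys)

/-- A congruence: a compatible equivalence relation. -/
def IsCongruence (ops : ∀ i : ι, (Fin (ar i) → A) → A) (θ : A → A → Prop) : Prop :=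
  Equivalence θ ∧
  ∀ (i : ι) (xs ys : Fin (ar i) → A), (∀ k, θ (xs k) (ys k)) → θ (ops i xs) (ops i ys)

/-- A congruence of the subalgebra with universe `B`, viewed as a partial
equivalence relation on the big algebra whose domain is exactly `B` and which is
compatible with all operations. -/
def IsCongruenceOn (ops : ∀ i : ι, (Fin (ar i) → A) → A) (B : Set A)
    (θ : A → A → Prop) : Prop :=
  (∀ x y, θ x y → x ∈ B ∧ y ∈ B) ∧
  (∀ x ∈ B, θ x x) ∧
  (∀ x y, θ x y → θ y x) ∧
  (∀ x y z, θ x y → θ y z → θ x z) ∧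
  ∀ (i : ι) (xs ys : Fin (ar i) → A), (∀ k, θ (xs k) (ys k)) → θ (ops i xs) (ops i ys)

/-- `f` is a binary term operation of the algebra. -/
def IsTermOp2 (ops : ∀ i : ι, (Fin (ar i) → A) → A) (f : A → A → A) : Prop :=
  ∃ t : Term ι ar 2, ∀ x y, f x y = t.eval ops ![x, y]

/-- `g` is a ternary term operation of the algebra. -/
def IsTermOp3 (ops : ∀ i : ι, (Fin (ar i) → A) → A) (g : A → A → A → A) : Prop :=
  ∃ t : Term ι ar 3, ∀ x y z, g x y z = t.eval ops ![x, y, z]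

/-- Connectivity of `a` and `b` in the hypergraph `H(A)` whose hyperedges are the
nonempty proper subuniverses: a chain of hyperedges with consecutive ones
intersecting, the first containing `a`, the last containing `b`. -/
def HConnected (ops : ∀ i : ι, (Fin (ar i) → A) → A) (a b : A) : Prop :=
  ∃ L : List (Set A),
    (∀ S ∈ L, IsSubuniverse ops S ∧ S.Nonempty ∧ S ≠ Set.univ) ∧
    L.Chain' (fun S T => (S ∩ T).Nonempty) ∧
    ∃ h : L ≠ [], a ∈ L.head h ∧ b ∈ L.getLast h

variable {ops : ∀ i : ι, (Fin (ar i) → A) → A}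

def Term.subst {n m : ℕ} : Term ι ar n → (Fin n → Term ι ar m) → Term ι ar m
  | .var j, σ => σ j
  | .app i ts, σ => .app i fun k => (ts k).subst σ

lemma Term.eval_subst {n m : ℕ} (t : Term ι ar n) (σ : Fin n → Term ι ar m) (x : Fin m → A) :
    (t.subst σ).eval ops x = t.eval ops fun j => (σ j).eval ops x := by
  induction t with
  | var j => rfl
  | app i ts ih => simp only [Term.subst, Term.eval, ih]

lemma Term.eval_const (hidem : Idempotent ops) {n : ℕ} (t : Term ι ar n) (x : A) :
    t.eval ops (fun _ => x) = x := by
  induction t with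
  | var j => rfl
  | app i ts ih => simp only [Term.eval, ih, hidem i x]

lemma Term.map_eval {h : A → A}
    (hh : ∀ (i : ι) (xs : Fin (ar i) → A), h (ops i xs) = ops i fun k => h (xs k))
    {n : ℕ} (t : Term ι ar n) (x : Fin n → A) :
    h (t.eval ops x) = t.eval ops fun j => h (x j) := by
  induction t with
  | var j => rfl
  | app i ts ih => simp only [Term.eval, hh, ih]

lemma IsTermOp2.apply_self (hidem : Idempotent ops) {s : A → A → A} (hs : IsTermOp2 ops s)
    (x : A) : s x x = x := by
  obtain ⟨t, ht⟩ := hs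
  rw [ht]
  convert t.eval_const hidem x using 2
  funext j
  fin_cases j <;> rfl

lemma IsTermOp2.map_apply {h : A → A}
    (hh : ∀ (i : ι) (xs : Fin (ar i) → A), h (ops i xs) = ops i fun k => h (xs k))
    {s : A → A → A} (hs : IsTermOp2 ops s) (x y : A) : h (s x y) = s (h x) (h y) := by
  obtain ⟨t, ht⟩ := hs
  rw [ht, ht, t.map_eval hh]
  congr 1
  funext j
  fin_cases j <;> rfl

lemma IsTermOp2.comp_var {f : A → A → A} (hf : IsTermOp2 ops f) (i j : Fin 3) :
    IsTermOp3 ops fun x y z => f (![x, y, z] i) (![x, y, z] j) := by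
  obtain ⟨t, ht⟩ := hf
  refine ⟨t.subst ![.var i, .var j], fun x y z => ?_⟩
  rw [Term.eval_subst]
  dsimp only
  rw [ht]
  congr 1
  funext k
  fin_cases k <;> rfl

lemma IsTermOp2.comp {s : A → A → A} (hs : IsTermOp2 ops s) {g h : A → A → A → A}
    (hg : IsTermOp3 ops g) (hh : IsTermOp3 ops h) :
    IsTermOp3 ops fun x y z => s (g x y z) (h x y z) := by
  obtain ⟨ts, hts⟩ := hs
  obtain ⟨tg, htg⟩ := hg
  obtain ⟨th, hth⟩ := hh
  refine ⟨ts.subst ![tg, th], fun x y z => ?_⟩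
  rw [Term.eval_subst]
  dsimp only
  rw [hts, htg, hth]
  congr 1
  funext k
  fin_cases k <;> rfl

theorem stmt_19_general {ι : Type} {ar : ι → ℕ} {A : Type}
    (ops : ∀ i : ι, (Fin (ar i) → A) → A)
    (hidem : Idempotent ops)
    (a b : A)
    (φ : A ≃ A)
    (hφop : ∀ (i : ι) (xs : Fin (ar i) → A), φ (ops i xs) = ops i (fun k => φ (xs k)))
    (hφa : φ a = b) (hφb : φ b = a)
    (star : A → A → A) (hstar : IsTermOp2 ops star)
    (f : A → A → A) (hf : IsTermOp2 ops f)
    (hca : star (f a b) a = a) (hac : star a (f a b) = a)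
    (hcb : star (f a b) b = b) (hbc : star b (f a b) = b) :
    ∃ g : A → A → A → A, IsTermOp3 ops g ∧
      g a a b = a ∧ g a b a = a ∧ g b a a = a ∧
      g b b a = b ∧ g b a b = b ∧ g a b b = b := by
  have hφstar : ∀ x y, star (φ x) (φ y) = φ (star x y) := fun x y =>
    (hstar.map_apply hφop x y).symm
  have hφc : φ (f a b) = f b a := by rw [hf.map_apply hφop, hφa, hφb]
  have hda : star (f b a) a = a := by simpa only [hcb, hφc, hφb] using hφstar (f a b) b
  have had : star a (f b a) = a := by simpa only [hbc, hφc, hφb] using hφstar b (f a b)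
  have hdb : star (f b a) b = b := by simpa only [hca, hφc, hφa] using hφstar (f a b) a
  have hbd : star b (f b a) = b := by simpa only [hac, hφc, hφa] using hφstar a (f a b)
  refine ⟨fun x y z => star (f x y) (star (f x z) (f y z)),
    hstar.comp (hf.comp_var 0 1) (hstar.comp (hf.comp_var 0 2) (hf.comp_var 1 2)),
    ?_, ?_, ?_, ?_, ?_, ?_⟩ <;>
  simp only [hf.apply_self hidem, hstar.apply_self hidem, hca, hac, hcb, hbc, hda, had, hdb, hbd]

/-- if an automorphism swaps `a` and `b` and `c = f(a,b)` lies
below both `a` and `b` with respect to a binary term operation `∗`, then the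
algebra has a term operation that is majority on `{a, b}`. -/
theorem stmt_19 {ι : Type} {ar : ι → ℕ} {A : Type} [Fintype A] [Nonempty A]
    (ops : ∀ i : ι, (Fin (ar i) → A) → A)
    (hidem : Idempotent ops)
    (a b : A)
    (φ : A ≃ A)
    (hφop : ∀ (i : ι) (xs : Fin (ar i) → A), φ (ops i xs) = ops i (fun k => φ (xs k)))
    (hφa : φ a = b) (hφb : φ b = a)
    (star : A → A → A) (hstar : IsTermOp2 ops star)
    (f : A → A → A) (hf : IsTermOp2 ops f)
    (hca : star (f a b) a = a) (hac : star a (f a b) = a)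
    (hcb : star (f a b) b = b) (hbc : star b (f a b) = b) :
    ∃ g : A → A → A → A, IsTermOp3 ops g ∧
      g a a b = a ∧ g a b a = a ∧ g b a a = a ∧
      g b b a = b ∧ g b a b = b ∧ g a b b = b :=
  stmt_19_general ops hidem a b φ hφop hφa hφb star hstar f hf hca hac hcb hbc

end UA
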